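/- The space of symmetric-matrix-valued polynomial fields of degree at most k decomposes as a direct sum ℙ_k(ℝ^d; 𝕊) = def ℙ_{k+1}(ℝ^d; ℝ^d) ⊕ (ker(·x) ∩ ℙ_k(ℝ^d; 𝕊)), where ker(·x) consists of matrix fields τ with τ(x)·x ≡ 0. -/

import Mathlib

open MvPolynomial Finset

/-- The symmetric gradient `def q = sym(∇q)` of a polynomial vector field. -/
noncomputable def defGrad (d : ℕ) (q : Fin d → MvPolynomial (Fin d) ℝ) :
    Fin d → Fin d → MvPolynomial (Fin d) ℝ :=
  fun i j => C (2⁻¹ : ℝ) * (pderiv j (q i) + pderiv i (q j))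

/-!
Everything reduces to homogeneous fields. If `w` is homogeneous of degree `r`, Euler's identity
gives `2 (def w) x = (r - 1) w + ∇(w · x)`.

Uniqueness: if `(def w) x = 0`, dotting with `x` and applying Euler's identity to `w · x` gives
`2r (w · x) = 0`, so for `r ≥ 2` we get `w · x = 0` and then `w = 0`. For `r ≤ 1` the matrix
`def w` is constant, and a constant matrix annihilating `x` vanishes.

Existence: for `σ` homogeneous of degree `r ≥ 1` put `u = σ x` and `s = u · x`; then
`q = (2 / r) u - ∇s / (r (r + 1))` satisfies `(def q) x = u`. For `r = 0` the symmetric constant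
`σ` is itself `def (σ x)`. Summing over degrees, `τ = σ - def q` is the other summand.
-/

open Matrix

namespace MvPolynomial

variable {R σ : Type*} [CommSemiring R]

theorem IsHomogeneous.pderiv_eq_zero {p : MvPolynomial σ R}
    (hp : p.IsHomogeneous 0) (i : σ) : pderiv i p = 0 := by
  rw [← totalDegree_zero_iff_isHomogeneous, totalDegree_eq_zero_iff_eq_C] at hp
  rw [hp, pderiv_C]

theorem sum_homogeneousComponent_of_totalDegree_lt {p : MvPolynomial σ R} {N : ℕ}
    (h : p.totalDegree < N) : ∑ r ∈ range N, homogeneousComponent r p = p := by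
  rw [← Finset.sum_subset (range_subset_range.mpr h) fun r hr hr' =>
    homogeneousComponent_eq_zero _ _ (by simpa using hr'), sum_homogeneousComponent]

theorem eq_zero_of_sum_eq_zero_of_isHomogeneous {s : Finset ℕ} {f : ℕ → MvPolynomial σ R}
    (hf : ∀ n ∈ s, (f n).IsHomogeneous n) (h : ∑ n ∈ s, f n = 0) {n : ℕ} (hn : n ∈ s) :
    f n = 0 := by
  have := congrArg (homogeneousComponent n) h
  rwa [map_sum, map_zero, Finset.sum_congr rfl fun m hm => homogeneousComponent_of_mem (hf m hm),
    Finset.sum_ite_eq, if_pos hn] at this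

variable [Fintype σ]

theorem pderiv_dotProduct_X (v : σ → MvPolynomial σ R) (i : σ) :
    pderiv i (v ⬝ᵥ X) = (fun j => pderiv i (v j)) ⬝ᵥ X + v i := by
  classical
  simp [dotProduct, pderiv_X, Finset.sum_add_distrib, Pi.single_apply, mul_comm, add_comm]

theorem IsHomogeneous.pderiv_dotProduct_X {p : MvPolynomial σ R} {n : ℕ}
    (hp : p.IsHomogeneous n) : (fun j => pderiv j p) ⬝ᵥ X = n • p := by
  simp_rw [dotProduct, mul_comm _ (X _), hp.sum_X_mul_pderiv]

theorem isHomogeneous_dotProduct_X {v : σ → MvPolynomial σ R} {n : ℕ}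
    (hv : ∀ j, (v j).IsHomogeneous n) : (v ⬝ᵥ X).IsHomogeneous (n + 1) :=
  IsHomogeneous.sum _ _ _ fun j _ => (hv j).mul (isHomogeneous_X _ _)

theorem eq_zero_of_dotProduct_X_eq_zero {v : σ → MvPolynomial σ R}
    (hv : ∀ i j, pderiv i (v j) = 0) (h : v ⬝ᵥ X = 0) : v = 0 := by
  funext i
  simpa [hv, pderiv_dotProduct_X] using congrArg (pderiv i) h

end MvPolynomial

section DefGrad

variable {d : ℕ}

theorem defGrad_eq_smul (w : Fin d → MvPolynomial (Fin d) ℝ) (i j : Fin d) :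
    defGrad d w i j = (2⁻¹ : ℝ) • (pderiv j (w i) + pderiv i (w j)) :=
  C_mul'

theorem defGrad_symm (w : Fin d → MvPolynomial (Fin d) ℝ) (i j : Fin d) :
    defGrad d w i j = defGrad d w j i := by
  rw [defGrad, defGrad, add_comm]

noncomputable def defGradLinearMap (d : ℕ) :
    (Fin d → MvPolynomial (Fin d) ℝ) →ₗ[ℝ] Fin d → Fin d → MvPolynomial (Fin d) ℝ where
  toFun := defGrad d
  map_add' _ _ := by
    funext i j
    simp only [defGrad_eq_smul, Pi.add_apply, map_add]
    module
  map_smul' _ _ := by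
    funext i j
    simp only [defGrad_eq_smul, Pi.smul_apply, Derivation.map_smul, RingHom.id_apply]
    module

theorem defGrad_zero : defGrad d (0 : Fin d → MvPolynomial (Fin d) ℝ) = 0 :=
  map_zero (defGradLinearMap d)

theorem defGrad_sub (w w' : Fin d → MvPolynomial (Fin d) ℝ) :
    defGrad d (w - w') = defGrad d w - defGrad d w' :=
  map_sub (defGradLinearMap d) w w'

theorem defGrad_sum {ι : Type*} (s : Finset ι) (w : ι → Fin d → MvPolynomial (Fin d) ℝ) :
    defGrad d (∑ r ∈ s, w r) = ∑ r ∈ s, defGrad d (w r) :=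
  map_sum (defGradLinearMap d) w s

theorem isHomogeneous_defGrad {r : ℕ} {w : Fin d → MvPolynomial (Fin d) ℝ}
    (hw : ∀ i, (w i).IsHomogeneous (r + 1)) (i j : Fin d) :
    (defGrad d w i j).IsHomogeneous r :=
  (((hw i).pderiv).add (hw j).pderiv).C_mul _

theorem defGrad_dotProduct_X_of_isHomogeneous {r : ℕ} {w : Fin d → MvPolynomial (Fin d) ℝ}
    (hw : ∀ i, (w i).IsHomogeneous r) (i : Fin d) :
    defGrad d w i ⬝ᵥ X = (2⁻¹ : ℝ) • (((r : ℝ) - 1) • w i + pderiv i (w ⬝ᵥ X)) := by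
  have euler := (hw i).pderiv_dotProduct_X
  rw [pderiv_dotProduct_X]
  simp only [dotProduct, defGrad_eq_smul, smul_mul_assoc, add_mul, ← Finset.smul_sum,
    Finset.sum_add_distrib] at euler ⊢
  rw [euler]
  module

theorem defGrad_eq_zero_of_isHomogeneous {r : ℕ} {w : Fin d → MvPolynomial (Fin d) ℝ}
    (hw : ∀ i, (w i).IsHomogeneous r) (h : ∀ i, defGrad d w i ⬝ᵥ X = 0) :
    defGrad d w = 0 := by
  rcases le_or_gt r 1 with hr | hr
  · have hconst : ∀ i j k, pderiv k (defGrad d w i j) = 0 := by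
      intro i j k
      have h0 : ∀ l m, (pderiv m (w l)).IsHomogeneous 0 := fun l m => by
        simpa [Nat.sub_eq_zero_of_le hr] using (hw l).pderiv (i := m)
      simp [defGrad, (h0 _ _).pderiv_eq_zero]
    funext i
    exact eq_zero_of_dotProduct_X_eq_zero (fun k j => hconst i j k) (h i)
  · have hgrad : ((r : ℝ) - 1) • w + (fun i => pderiv i (w ⬝ᵥ X)) = 0 := by
      funext i
      have hi := h i
      rw [defGrad_dotProduct_X_of_isHomogeneous hw, smul_eq_zero] at hi
      exact hi.resolve_left (by norm_num)
    have hdot : (2 * r : ℝ) • (w ⬝ᵥ X) = 0 := by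
      have := congrArg (· ⬝ᵥ X) hgrad
      simp only [add_dotProduct, smul_dotProduct, zero_dotProduct,
        (isHomogeneous_dotProduct_X hw).pderiv_dotProduct_X] at this
      rw [← this]
      module
    have hw0 : w = 0 := by
      rw [smul_eq_zero, or_iff_right (by positivity)] at hdot
      have : ((r : ℝ) - 1) • w = 0 := by simpa [hdot, ← Pi.zero_def] using hgrad
      exact (smul_eq_zero.mp this).resolve_left (sub_ne_zero.mpr (by exact_mod_cast hr.ne'))
    rw [hw0, defGrad_zero]

theorem isHomogeneous_defGrad_dotProduct_X {r : ℕ} {w : Fin d → MvPolynomial (Fin d) ℝ}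
    (hw : ∀ i, (w i).IsHomogeneous r) (i : Fin d) : (defGrad d w i ⬝ᵥ X).IsHomogeneous r := by
  rw [defGrad_dotProduct_X_of_isHomogeneous hw, ← mem_homogeneousSubmodule]
  exact Submodule.smul_mem _ _ <| Submodule.add_mem _ (Submodule.smul_mem _ _ (hw i))
    (isHomogeneous_dotProduct_X hw).pderiv

theorem defGrad_eq_zero_of_dotProduct_X_eq_zero {w : Fin d → MvPolynomial (Fin d) ℝ}
    (h : ∀ i, defGrad d w i ⬝ᵥ X = 0) : defGrad d w = 0 := by
  set N := univ.sup (fun i => (w i).totalDegree) + 1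
  set v : ℕ → Fin d → MvPolynomial (Fin d) ℝ := fun r i => homogeneousComponent r (w i)
  have hv : ∀ r i, (v r i).IsHomogeneous r := fun r i =>
    homogeneousComponent_isHomogeneous r (w i)
  have hsplit : defGrad d w = ∑ r ∈ range N, defGrad d (v r) := by
    have hw : w = ∑ r ∈ range N, v r := funext fun i => by
      rw [Finset.sum_apply]
      exact (sum_homogeneousComponent_of_totalDegree_lt
        (Nat.lt_succ_of_le (le_sup (f := fun i => (w i).totalDegree) (mem_univ i)))).symm
    rw [hw, defGrad_sum]
  rw [hsplit]
  refine sum_eq_zero fun r hr => defGrad_eq_zero_of_isHomogeneous (hv r) fun i => ?_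
  refine eq_zero_of_sum_eq_zero_of_isHomogeneous (f := fun r => defGrad d (v r) i ⬝ᵥ X)
    (fun r _ => isHomogeneous_defGrad_dotProduct_X (hv r) i) ?_ hr
  rw [← sum_dotProduct, ← Finset.sum_apply, ← hsplit]
  exact h i

theorem defGrad_eq_of_dotProduct_X_eq {w w' : Fin d → MvPolynomial (Fin d) ℝ}
    (h : ∀ i, defGrad d w i ⬝ᵥ X = defGrad d w' i ⬝ᵥ X) : defGrad d w = defGrad d w' := by
  rw [← sub_eq_zero, ← defGrad_sub]
  refine defGrad_eq_zero_of_dotProduct_X_eq_zero fun i => ?_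
  rw [defGrad_sub, Pi.sub_apply, sub_dotProduct, h i, sub_self]

theorem defGrad_mulVec_X_of_pderiv_eq_zero {σ : Fin d → Fin d → MvPolynomial (Fin d) ℝ}
    (hsym : ∀ i j, σ i j = σ j i) (hconst : ∀ i j k, pderiv k (σ i j) = 0) :
    defGrad d (σ *ᵥ X) = σ := by
  funext i j
  simp only [defGrad_eq_smul, mulVec, pderiv_dotProduct_X, hconst, ← Pi.zero_def,
    zero_dotProduct, zero_add, hsym j i]
  module

theorem exists_defGrad_dotProduct_X_eq_of_isHomogeneous {r : ℕ} (hr : r ≠ 0)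
    {u : Fin d → MvPolynomial (Fin d) ℝ} (hu : ∀ i, (u i).IsHomogeneous (r + 1)) :
    ∃ q : Fin d → MvPolynomial (Fin d) ℝ,
      (∀ i, (q i).IsHomogeneous (r + 1)) ∧ ∀ i, defGrad d q i ⬝ᵥ X = u i := by
  set s := u ⬝ᵥ X
  have hs : s.IsHomogeneous (r + 2) := isHomogeneous_dotProduct_X hu
  -- Dotting `(def q) x = u` with `x` forces `q · x = s / (r + 1)`; solving for `q` gives:
  set q := (2 / r : ℝ) • u - (1 / (r * (r + 1)) : ℝ) • fun i => pderiv i s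
  have hq : ∀ i, (q i).IsHomogeneous (r + 1) := fun i => by
    rw [← mem_homogeneousSubmodule]
    exact Submodule.sub_mem _ (Submodule.smul_mem _ _ (hu i)) (Submodule.smul_mem _ _ hs.pderiv)
  refine ⟨q, hq, fun i => ?_⟩
  have hqs : q ⬝ᵥ X = (2 / r : ℝ) • s - (1 / (r * (r + 1)) : ℝ) • (r + 2) • s := by
    rw [sub_dotProduct, smul_dotProduct, smul_dotProduct, hs.pderiv_dotProduct_X]
  rw [defGrad_dotProduct_X_of_isHomogeneous hq, hqs]
  simp only [q, Pi.sub_apply, Pi.smul_apply, map_sub, Derivation.map_smul, map_nsmul]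
  have hr' : (r : ℝ) ≠ 0 := Nat.cast_ne_zero.mpr hr
  match_scalars <;> field_simp <;> ring

theorem exists_isHomogeneous_defGrad_dotProduct_X_eq {r : ℕ}
    {σ : Fin d → Fin d → MvPolynomial (Fin d) ℝ} (hsym : ∀ i j, σ i j = σ j i)
    (hσ : ∀ i j, (σ i j).IsHomogeneous r) :
    ∃ q : Fin d → MvPolynomial (Fin d) ℝ,
      (∀ i, (q i).IsHomogeneous (r + 1)) ∧ ∀ i, defGrad d q i ⬝ᵥ X = σ i ⬝ᵥ X := by
  rcases eq_or_ne r 0 with rfl | hr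
  · refine ⟨σ *ᵥ X, fun i => isHomogeneous_dotProduct_X (hσ i), fun i => ?_⟩
    rw [defGrad_mulVec_X_of_pderiv_eq_zero hsym fun i j k => (hσ i j).pderiv_eq_zero k]
  · exact exists_defGrad_dotProduct_X_eq_of_isHomogeneous hr fun i =>
      isHomogeneous_dotProduct_X (hσ i)

theorem exists_defGrad_dotProduct_X_eq {k : ℕ} {σ : Fin d → Fin d → MvPolynomial (Fin d) ℝ}
    (hsym : ∀ i j, σ i j = σ j i) (hdeg : ∀ i j, (σ i j).totalDegree ≤ k) :
    ∃ q : Fin d → MvPolynomial (Fin d) ℝ, (∀ i, (q i).totalDegree ≤ k + 1) ∧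
      (∀ i j, (defGrad d q i j).totalDegree ≤ k) ∧
      ∀ i, defGrad d q i ⬝ᵥ X = σ i ⬝ᵥ X := by
  choose Q hQ hQσ using fun r => exists_isHomogeneous_defGrad_dotProduct_X_eq (r := r)
    (σ := fun i j => homogeneousComponent r (σ i j)) (fun i j => by rw [hsym])
    (fun i j => homogeneousComponent_isHomogeneous r _)
  refine ⟨∑ r ∈ range (k + 1), Q r, fun i => ?_, fun i j => ?_, fun i => ?_⟩
  · rw [Finset.sum_apply]
    exact totalDegree_finsetSum_le fun r hr =>
      (hQ r i).totalDegree_le.trans (by simp only [mem_range] at hr; omega)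
  · rw [defGrad_sum, Finset.sum_apply, Finset.sum_apply]
    exact totalDegree_finsetSum_le fun r hr =>
      (isHomogeneous_defGrad (hQ r) i j).totalDegree_le.trans
        (by simp only [mem_range] at hr; omega)
  · rw [defGrad_sum, Finset.sum_apply, sum_dotProduct, Finset.sum_congr rfl fun r _ => hQσ r i,
      ← sum_dotProduct]
    congr
    funext j
    rw [Finset.sum_apply]
    exact sum_homogeneousComponent_of_totalDegree_lt (Nat.lt_succ_of_le (hdeg i j))

end DefGrad

theorem stmt_12_general (d k : ℕ)
    (σ : Fin d → Fin d → MvPolynomial (Fin d) ℝ)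
    (hsym : ∀ i j, σ i j = σ j i) (hdeg : ∀ i j, (σ i j).totalDegree ≤ k) :
    ∃! p : (Fin d → Fin d → MvPolynomial (Fin d) ℝ) ×
           (Fin d → Fin d → MvPolynomial (Fin d) ℝ),
      (∃ q : Fin d → MvPolynomial (Fin d) ℝ, (∀ i, (q i).totalDegree ≤ k + 1) ∧
        p.1 = defGrad d q) ∧
      (∀ i j, (p.2 i j).totalDegree ≤ k) ∧ (∀ i j, p.2 i j = p.2 j i) ∧
      (∀ i, ∑ j : Fin d, p.2 i j * X j = 0) ∧
      σ = fun i j => p.1 i j + p.2 i j := by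
  obtain ⟨q, hq, hdefq, hdot⟩ := exists_defGrad_dotProduct_X_eq hsym hdeg
  refine ⟨(defGrad d q, σ - defGrad d q), ⟨⟨q, hq, rfl⟩, fun i j => ?_, fun i j => ?_,
    fun i => ?_, ?_⟩, ?_⟩
  · exact (totalDegree_sub _ _).trans (max_le (hdeg i j) (hdefq i j))
  · simp only [Pi.sub_apply, hsym i j, defGrad_symm q i j]
  · exact (sub_dotProduct _ _ _).trans (sub_eq_zero.mpr (hdot i).symm)
  · simp
  · rintro ⟨_, τ⟩ ⟨⟨q', -, rfl⟩, -, -, hτ, hστ⟩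
    have hσ : ∀ i, σ i = defGrad d q' i + τ i := fun i => congrFun hστ i
    have hdefq' : defGrad d q' = defGrad d q := defGrad_eq_of_dotProduct_X_eq fun i => by
      rw [hdot i, hσ i, add_dotProduct, left_eq_add]
      exact hτ i
    refine Prod.ext hdefq' (funext fun i => ?_)
    change τ i = σ i - defGrad d q i
    rw [hσ i, hdefq', add_sub_cancel_left]

/-- Direct sum decomposition
`ℙ_k(ℝ^d; 𝕊) = def ℙ_{k+1}(ℝ^d; ℝ^d) ⊕ (ker(·x) ∩ ℙ_k(ℝ^d; 𝕊))`. -/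
theorem stmt_12 (d k : ℕ) (hd : 1 ≤ d)
    (σ : Fin d → Fin d → MvPolynomial (Fin d) ℝ)
    (hsym : ∀ i j, σ i j = σ j i) (hdeg : ∀ i j, (σ i j).totalDegree ≤ k) :
    ∃! p : (Fin d → Fin d → MvPolynomial (Fin d) ℝ) ×
           (Fin d → Fin d → MvPolynomial (Fin d) ℝ),
      (∃ q : Fin d → MvPolynomial (Fin d) ℝ, (∀ i, (q i).totalDegree ≤ k + 1) ∧
        p.1 = defGrad d q) ∧
      (∀ i j, (p.2 i j).totalDegree ≤ k) ∧ (∀ i j, p.2 i j = p.2 j i) ∧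
      (∀ i, ∑ j : Fin d, p.2 i j * X j = 0) ∧
      σ = fun i j => p.1 i j + p.2 i j :=
  stmt_12_general d k σ hsym hdeg
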